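/- If 0 ≤ r(x,u,w) and the initial function satisfies q̂_0^j(x,a) = 0 for all (x,a), then the AMAFQI sequence q̂_N^j is pointwise monotonically increasing in N: q̂_N^j(x,a) ≤ q̂_{N+1}^j(x,a) for all (x,a) ∈ X × A^j and all N ∈ ℕ. -/

import Mathlib

/-- Auxiliary AMAFQI function `q̃` built from a fitted function `q`. -/
noncomputable def qtil {X A U : Type*} {L : ℕ} [Fintype A] [Nonempty A]
    (Kbar : Fin L → X → U → ℝ) (rl : Fin L → ℝ) (β : ℝ) (xplus : Fin L → X)
    (q : X → A → ℝ) : X → U → ℝ :=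
  fun x u => ∑ l, Kbar l x u * (rl l + β * ⨆ a' : A, q (xplus l) a')

/-- AMAFQI iterates `q̂_N` for a single agent `j`, with `ulj l = u^l(j)`. -/
noncomputable def qhat {X A U : Type*} {L : ℕ} [Fintype A] [Nonempty A]
    (K : Fin L → X → A → ℝ) (Kbar : Fin L → X → U → ℝ)
    (xl : Fin L → X) (ul : Fin L → U) (ulj : Fin L → A)
    (xplus : Fin L → X) (rl : Fin L → ℝ) (β : ℝ) : ℕ → X → A → ℝ
  | 0 => fun _ _ => 0
  | N + 1 => fun x a => ∑ l, K l x a *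
      max (qhat K Kbar xl ul ulj xplus rl β N (xl l) (ulj l))
        (qtil Kbar rl β xplus (qhat K Kbar xl ul ulj xplus rl β N) (xl l) (ul l))

/-!
One AMAFQI iteration `q̂_{N-1} ↦ q̂_N` is a monotone map on functions, since it only combines
its argument through nonnegative weights, `max` and `sup`. The new value is a nonnegative
combination of maxima that include the old value, so `q̂_1 ≥ 0 = q̂_0`; and the iterates of a
monotone map starting below its image increase.
-/

section AMAFQI

variable {X A U : Type*} {L : ℕ} [Fintype A] [Nonempty A]
  (K : Fin L → X → A → ℝ) (Kbar : Fin L → X → U → ℝ)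
  (xl : Fin L → X) (ul : Fin L → U) (ulj : Fin L → A)
  (xplus : Fin L → X) (rl : Fin L → ℝ) (β : ℝ)

theorem qtil_mono (hβ0 : 0 ≤ β) (hKbar : ∀ l x u, 0 ≤ Kbar l x u) :
    Monotone (qtil (A := A) Kbar rl β xplus) := by
  intro q q' hq x u
  refine Finset.sum_le_sum fun l _ => mul_le_mul_of_nonneg_left ?_ (hKbar l x u)
  exact add_le_add_right (mul_le_mul_of_nonneg_left
    (ciSup_mono (Set.finite_range _).bddAbove fun a => hq _ a) hβ0) _

noncomputable def amafqiUpdate (q : X → A → ℝ) : X → A → ℝ :=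
  fun x a => ∑ l, K l x a * max (q (xl l) (ulj l)) (qtil Kbar rl β xplus q (xl l) (ul l))

theorem qhat_eq_iterate (N : ℕ) :
    qhat K Kbar xl ul ulj xplus rl β N = (amafqiUpdate K Kbar xl ul ulj xplus rl β)^[N] 0 := by
  induction N with
  | zero => rfl
  | succ N ih => rw [Function.iterate_succ_apply', ← ih]; rfl

variable {K Kbar β}

theorem amafqiUpdate_mono (hK : ∀ l x a, 0 ≤ K l x a) (hβ0 : 0 ≤ β)
    (hKbar : ∀ l x u, 0 ≤ Kbar l x u) :
    Monotone (amafqiUpdate K Kbar xl ul ulj xplus rl β) := fun _ _ hq x a =>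
  Finset.sum_le_sum fun l _ => mul_le_mul_of_nonneg_left
    (max_le_max (hq _ _) (qtil_mono Kbar xplus rl β hβ0 hKbar hq _ _)) (hK l x a)

theorem amafqiUpdate_nonneg (hK : ∀ l x a, 0 ≤ K l x a) {q : X → A → ℝ} (hq : 0 ≤ q) :
    0 ≤ amafqiUpdate K Kbar xl ul ulj xplus rl β q := fun x a =>
  Finset.sum_nonneg fun l _ => mul_nonneg (hK l x a) ((hq _ _).trans (le_max_left _ _))

end AMAFQI

theorem stmt2_general {X A U : Type*} {L : ℕ} [Fintype A] [Nonempty A]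
    (K : Fin L → X → A → ℝ) (Kbar : Fin L → X → U → ℝ)
    (xl : Fin L → X) (ul : Fin L → U) (ulj : Fin L → A)
    (xplus : Fin L → X) (rl : Fin L → ℝ) (β : ℝ)
    (hβ0 : 0 ≤ β)
    (hK : ∀ l x a, 0 ≤ K l x a)
    (hKbar : ∀ l x u, 0 ≤ Kbar l x u) :
    ∀ (N : ℕ) (x : X) (a : A),
      qhat K Kbar xl ul ulj xplus rl β N x a ≤ qhat K Kbar xl ul ulj xplus rl β (N + 1) x a := by
  intro N
  have hmono := (amafqiUpdate_mono xl ul ulj xplus rl hK hβ0 hKbar).monotone_iterate_of_le_map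
    (amafqiUpdate_nonneg xl ul ulj xplus rl hK le_rfl)
  rw [qhat_eq_iterate, qhat_eq_iterate]
  exact hmono N.le_succ

/-- Lemma 1: with nonnegative rewards and zero initialization, the AMAFQI iterates are
pointwise monotonically increasing in `N`. -/
theorem stmt2 {X A U : Type*} {L : ℕ} [Fintype A] [Nonempty A]
    (K : Fin L → X → A → ℝ) (Kbar : Fin L → X → U → ℝ)
    (xl : Fin L → X) (ul : Fin L → U) (ulj : Fin L → A)
    (xplus : Fin L → X) (rl : Fin L → ℝ) (β : ℝ)
    (hβ0 : 0 ≤ β) (hβ1 : β < 1)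
    (hK : ∀ l x a, 0 ≤ K l x a) (hKn : ∀ x a, ∑ l, K l x a = 1)
    (hKbar : ∀ l x u, 0 ≤ Kbar l x u) (hKbarn : ∀ x u, ∑ l, Kbar l x u = 1)
    (hr : ∀ l, 0 ≤ rl l) :
    ∀ (N : ℕ) (x : X) (a : A),
      qhat K Kbar xl ul ulj xplus rl β N x a ≤ qhat K Kbar xl ul ulj xplus rl β (N + 1) x a :=
  stmt2_general K Kbar xl ul ulj xplus rl β hβ0 hK hKbar
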